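/- arXiv:1611.03583 — 5 statements merged into one kernel-verified Lean document; each statement's English description precedes it below -/
import Mathlib

section
/- The Rayleigh property is preserved under contraction: if a matroid M on [n] is Rayleigh, then for any non-loop element g, the contraction M/g is Rayleigh. -/
open Finset

/-- Basis generating polynomial of the collection `Bs`, restricted to bases
containing `I` and disjoint from `J`, evaluated at weights `a`. -/
def genPoly {α : Type*} [DecidableEq α] (Bs : Finset (Finset α)) (I J : Finset α)
    (a : α → ℝ) : ℝ :=
  ∑ B ∈ Bs.filter (fun B => I ⊆ B ∧ Disjoint J B), ∏ i ∈ B, a i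

/-- The Rayleigh property for a matroid given by its collection of bases. -/
def IsRayleigh {α : Type*} [DecidableEq α] (Bs : Finset (Finset α)) : Prop :=
  ∀ e f : α, e ≠ f → ∀ a : α → ℝ, (∀ i, 0 ≤ a i) →
    genPoly Bs {e, f} ∅ a * genPoly Bs ∅ {e, f} a ≤
      genPoly Bs {e} {f} a * genPoly Bs {f} {e} a

/-- `Bs` is the collection of bases of a matroid: nonempty and satisfying the
basis exchange axiom. -/
def IsMatroidBases {α : Type*} [DecidableEq α] (Bs : Finset (Finset α)) : Prop :=
  Bs.Nonempty ∧
    ∀ B₁ ∈ Bs, ∀ B₂ ∈ Bs, ∀ x ∈ B₁ \ B₂, ∃ y ∈ B₂ \ B₁, insert y (B₁.erase x) ∈ Bs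

/-!
Splitting the bases of `M` according to whether they contain `g` gives, for `g ∉ I ∪ J`,
`M_I^J(a) = a_g · (M/g)_I^J(a) + (M∖g)_I^J(a)`. The Rayleigh inequality of `M` at weights with
`a_g = t` therefore compares two quadratics in `t`, valid for all `t ≥ 0`; comparing leading
coefficients as `t → ∞` gives the Rayleigh inequality of `M/g`.
-/
open Filter Topology

lemma nonneg_of_forall_nonneg_quadratic {A B C : ℝ}
    (h : ∀ t : ℝ, 0 ≤ t → 0 ≤ A * t ^ 2 + B * t + C) : 0 ≤ A := by
  have hlim : Tendsto (fun t : ℝ => A + B * t⁻¹ + C * t⁻¹ ^ 2) atTop (𝓝 A) := by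
    simpa using ((tendsto_inv_atTop_zero.const_mul B).const_add A).add
      ((tendsto_inv_atTop_zero.pow 2).const_mul C)
  refine ge_of_tendsto hlim ((eventually_gt_atTop 0).mono fun t ht => ?_)
  have hquot : A + B * t⁻¹ + C * t⁻¹ ^ 2 = (A * t ^ 2 + B * t + C) / t ^ 2 := by
    field_simp
  rw [hquot]
  exact div_nonneg (h t ht.le) (by positivity)

lemma mul_le_mul_of_forall_affine_mul_le {c₁ c₂ c₃ c₄ d₁ d₂ d₃ d₄ : ℝ}
    (h : ∀ t : ℝ, 0 ≤ t → (t * c₁ + d₁) * (t * c₂ + d₂) ≤ (t * c₃ + d₃) * (t * c₄ + d₄)) :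
    c₁ * c₂ ≤ c₃ * c₄ := by
  have := nonneg_of_forall_nonneg_quadratic (A := c₃ * c₄ - c₁ * c₂)
    (B := c₃ * d₄ + d₃ * c₄ - c₁ * d₂ - d₁ * c₂) (C := d₃ * d₄ - d₁ * d₂)
    fun t ht => by nlinarith [h t ht]
  linarith

section Bases

variable {α : Type*} [DecidableEq α]

def contractBases (Bs : Finset (Finset α)) (g : α) : Finset (Finset α) :=
  (Bs.filter (fun B => g ∈ B)).image (fun B => B.erase g)

def deleteBases (Bs : Finset (Finset α)) (g : α) : Finset (Finset α) :=
  Bs.filter (fun B => g ∉ B)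

lemma genPoly_eq_filter_mem_add_deleteBases (Bs : Finset (Finset α))
    (g : α) (I J : Finset α) (a : α → ℝ) :
    genPoly Bs I J a =
      genPoly (Bs.filter (fun B => g ∈ B)) I J a + genPoly (deleteBases Bs g) I J a := by
  simp only [genPoly, deleteBases, filter_filter]
  rw [← sum_filter_add_sum_filter_not _ (fun B => g ∈ B), filter_filter, filter_filter]
  congr 2 <;> ext B <;> simp only [mem_filter] <;> tauto

lemma genPoly_filter_mem_update (Bs : Finset (Finset α)) {g : α} {I J : Finset α}
    (hI : g ∉ I) (hJ : g ∉ J) (a : α → ℝ) (t : ℝ) :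
    genPoly (Bs.filter (fun B => g ∈ B)) I J (Function.update a g t) =
      t * genPoly (contractBases Bs g) I J a := by
  rw [genPoly, genPoly, contractBases, filter_image, sum_image, mul_sum]
  rotate_left
  · exact fun B hB B' hB' => erase_injOn' g (mem_filter.mp (mem_filter.mp hB).1).2
      (mem_filter.mp (mem_filter.mp hB').1).2
  refine sum_congr ?_ fun B hB => ?_
  · ext B
    simp only [mem_filter, subset_erase, hI, not_false_eq_true, and_true]
    rw [← disjoint_erase_comm, erase_eq_of_notMem hJ]
  · rw [prod_update_of_mem (mem_filter.mp (mem_filter.mp hB).1).2, sdiff_singleton_eq_erase]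

lemma genPoly_deleteBases_update (Bs : Finset (Finset α)) (g : α) (I J : Finset α)
    (a : α → ℝ) (t : ℝ) :
    genPoly (deleteBases Bs g) I J (Function.update a g t) = genPoly (deleteBases Bs g) I J a :=
  sum_congr rfl fun _ hB => prod_congr rfl fun _ hi =>
    Function.update_of_ne (ne_of_mem_of_not_mem hi (mem_filter.mp (mem_filter.mp hB).1).2) t a

lemma genPoly_update (Bs : Finset (Finset α)) {g : α} {I J : Finset α}
    (hI : g ∉ I) (hJ : g ∉ J) (a : α → ℝ) (t : ℝ) :
    genPoly Bs I J (Function.update a g t) =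
      t * genPoly (contractBases Bs g) I J a + genPoly (deleteBases Bs g) I J a := by
  rw [genPoly_eq_filter_mem_add_deleteBases Bs g,
    genPoly_filter_mem_update Bs hI hJ, genPoly_deleteBases_update]

lemma IsRayleigh.contractBases {Bs : Finset (Finset α)} (hR : IsRayleigh Bs) (g : α)
    {e f : α} (hef : e ≠ f) (heg : e ≠ g) (hfg : f ≠ g) {a : α → ℝ} (ha : ∀ i, 0 ≤ a i) :
    genPoly (contractBases Bs g) {e, f} ∅ a * genPoly (contractBases Bs g) ∅ {e, f} a ≤
      genPoly (contractBases Bs g) {e} {f} a * genPoly (contractBases Bs g) {f} {e} a := by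
  have hge : g ∉ ({e} : Finset α) := by simpa using heg.symm
  have hgf : g ∉ ({f} : Finset α) := by simpa using hfg.symm
  have hgef : g ∉ ({e, f} : Finset α) := by simp [heg.symm, hfg.symm]
  apply mul_le_mul_of_forall_affine_mul_le
  intro t ht
  have hR_update := hR e f hef (Function.update a g t) fun i => by
    rcases eq_or_ne i g with rfl | hi
    · simpa using ht
    · simpa [hi] using ha i
  rw [genPoly_update Bs hgef (notMem_empty g), genPoly_update Bs (notMem_empty g) hgef,
    genPoly_update Bs hge hgf, genPoly_update Bs hgf hge] at hR_update
  exact hR_update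

end Bases

theorem rayleigh_contraction_general (n : ℕ) (Bs : Finset (Finset (Fin n)))
    (hR : IsRayleigh Bs) (g : Fin n) :
    ∀ e f : Fin n, e ≠ f → e ≠ g → f ≠ g → ∀ a : Fin n → ℝ, (∀ i, 0 ≤ a i) →
      genPoly ((Bs.filter (fun B => g ∈ B)).image (fun B => B.erase g)) {e, f} ∅ a *
          genPoly ((Bs.filter (fun B => g ∈ B)).image (fun B => B.erase g)) ∅ {e, f} a ≤
        genPoly ((Bs.filter (fun B => g ∈ B)).image (fun B => B.erase g)) {e} {f} a *
          genPoly ((Bs.filter (fun B => g ∈ B)).image (fun B => B.erase g)) {f} {e} a :=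
  fun _ _ hef heg hfg _ ha => hR.contractBases g hef heg hfg ha

/-- The Rayleigh property is preserved under contraction of a non-loop element `g`. -/
theorem rayleigh_contraction (n : ℕ) (Bs : Finset (Finset (Fin n)))
    (hM : IsMatroidBases Bs) (hR : IsRayleigh Bs) (g : Fin n)
    (hg : ∃ B ∈ Bs, g ∈ B) :
    ∀ e f : Fin n, e ≠ f → e ≠ g → f ≠ g → ∀ a : Fin n → ℝ, (∀ i, 0 ≤ a i) →
      genPoly ((Bs.filter (fun B => g ∈ B)).image (fun B => B.erase g)) {e, f} ∅ a *
          genPoly ((Bs.filter (fun B => g ∈ B)).image (fun B => B.erase g)) ∅ {e, f} a ≤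
        genPoly ((Bs.filter (fun B => g ∈ B)).image (fun B => B.erase g)) {e} {f} a *
          genPoly ((Bs.filter (fun B => g ∈ B)).image (fun B => B.erase g)) {f} {e} a :=
  rayleigh_contraction_general n Bs hR g
end

section
/- If a matroid M has the Rayleigh property, then its dual matroid M* also has the Rayleigh property. -/
open Finset

lemma genPoly_cont {α : Type*} [DecidableEq α] [Fintype α] (Bs : Finset (Finset α))
    (I J : Finset α) : Continuous fun a : α → ℝ => genPoly Bs I J a := by
  unfold genPoly
  exact continuous_finset_sum _ fun B _ => continuous_finset_prod _ fun i _ => continuous_apply i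

lemma genPoly_dual {n : ℕ} (Bs : Finset (Finset (Fin n))) (I J : Finset (Fin n))
    (a : Fin n → ℝ) (ha : ∀ i, 0 < a i) :
    genPoly (Bs.image (fun B => Finset.univ \ B)) I J a
      = (∏ i, a i) * genPoly Bs J I (fun i => (a i)⁻¹) := by
  unfold genPoly
  have himg : Bs.image (fun B => Finset.univ \ B) = Bs.image compl := by
    exact Finset.image_congr fun B _ => (Finset.compl_eq_univ_sdiff B).symm
  rw [himg, Finset.filter_image,
    Finset.sum_image (fun x _ y _ h => compl_injective h), Finset.mul_sum,
    Finset.sum_filter, Finset.sum_filter]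
  refine Finset.sum_congr rfl fun B hB => ?_
  have hc1 : I ⊆ Bᶜ ↔ Disjoint I B := by
    simp [Finset.subset_iff, Finset.disjoint_left]
  have hc2 : Disjoint J Bᶜ ↔ J ⊆ B := by
    simp [Finset.subset_iff, Finset.disjoint_left]
  have hprod : ∏ i ∈ Bᶜ, a i = (∏ i, a i) * ∏ i ∈ B, (a i)⁻¹ := by
    rw [← Finset.prod_mul_prod_compl B a, mul_comm (∏ i ∈ B, a i), mul_assoc,
      ← Finset.prod_mul_distrib]
    have : ∀ i ∈ B, a i * (a i)⁻¹ = 1 := fun i _ => mul_inv_cancel₀ (ha i).ne'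
    rw [Finset.prod_congr rfl this, Finset.prod_const_one, mul_one]
  by_cases h : J ⊆ B ∧ Disjoint I B
  · rw [if_pos ⟨hc1.mpr h.2, hc2.mpr h.1⟩, if_pos h, hprod]
  · rw [if_neg (fun hh => h ⟨hc2.mp hh.2, hc1.mp hh.1⟩), if_neg h]

lemma rayleigh_dual_pos (n : ℕ) (Bs : Finset (Finset (Fin n))) (hR : IsRayleigh Bs)
    (e f : Fin n) (hef : e ≠ f) (a : Fin n → ℝ) (ha : ∀ i, 0 < a i) :
    genPoly (Bs.image (fun B => Finset.univ \ B)) {e, f} ∅ a *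
        genPoly (Bs.image (fun B => Finset.univ \ B)) ∅ {e, f} a ≤
      genPoly (Bs.image (fun B => Finset.univ \ B)) {e} {f} a *
        genPoly (Bs.image (fun B => Finset.univ \ B)) {f} {e} a := by
  rw [genPoly_dual _ _ _ _ ha, genPoly_dual _ _ _ _ ha, genPoly_dual _ _ _ _ ha,
    genPoly_dual _ _ _ _ ha]
  set b : Fin n → ℝ := fun i => (a i)⁻¹ with hb
  have hb0 : ∀ i, 0 ≤ b i := fun i => inv_nonneg.mpr (ha i).le
  have hP : (0:ℝ) ≤ ∏ i, a i := Finset.prod_nonneg fun i _ => (ha i).le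
  have key := hR e f hef b hb0
  calc (∏ i, a i) * genPoly Bs ∅ {e, f} b * ((∏ i, a i) * genPoly Bs {e, f} ∅ b)
      = (∏ i, a i) * (∏ i, a i) * (genPoly Bs {e, f} ∅ b * genPoly Bs ∅ {e, f} b) := by ring
    _ ≤ (∏ i, a i) * (∏ i, a i) * (genPoly Bs {e} {f} b * genPoly Bs {f} {e} b) := by
        exact mul_le_mul_of_nonneg_left key (mul_nonneg hP hP)
    _ = (∏ i, a i) * genPoly Bs {f} {e} b * ((∏ i, a i) * genPoly Bs {e} {f} b) := by ring

/-- If a matroid is Rayleigh, so is its dual. -/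
theorem rayleigh_dual (n : ℕ) (Bs : Finset (Finset (Fin n)))
    (hM : IsMatroidBases Bs) (hR : IsRayleigh Bs) :
    IsRayleigh (Bs.image (fun B => Finset.univ \ B)) := by
  intro e f hef a ha
  set D := Bs.image (fun B => Finset.univ \ B) with hD
  set L : (Fin n → ℝ) → ℝ := fun x => genPoly D {e, f} ∅ x * genPoly D ∅ {e, f} x with hL
  set R : (Fin n → ℝ) → ℝ := fun x => genPoly D {e} {f} x * genPoly D {f} {e} x with hRd
  have hLc : Continuous L := (genPoly_cont D _ _).mul (genPoly_cont D _ _)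
  have hRc : Continuous R := (genPoly_cont D _ _).mul (genPoly_cont D _ _)
  have hkey : ∀ t ∈ Set.Ioi (0:ℝ), L (fun i => a i + t) ≤ R (fun i => a i + t) := by
    intro t ht
    exact rayleigh_dual_pos n Bs hR e f hef _ fun i => add_pos_of_nonneg_of_pos (ha i) ht
  have hcont : Continuous fun t : ℝ => (fun i => a i + t) := by
    exact continuous_pi fun i => continuous_const.add continuous_id
  have h0 : (fun i => a i + (0:ℝ)) = a := by funext i; simp
  have hLt : Filter.Tendsto (fun t : ℝ => L (fun i => a i + t)) (nhdsWithin 0 (Set.Ioi 0)) (nhds (L a)) := by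
    have := (hLc.comp hcont).tendsto 0
    rw [Function.comp] at this
    simp only [h0] at this
    exact this.mono_left nhdsWithin_le_nhds
  have hRt : Filter.Tendsto (fun t : ℝ => R (fun i => a i + t)) (nhdsWithin 0 (Set.Ioi 0)) (nhds (R a)) := by
    have := (hRc.comp hcont).tendsto 0
    rw [Function.comp] at this
    simp only [h0] at this
    exact this.mono_left nhdsWithin_le_nhds
  exact le_of_tendsto_of_tendsto hLt hRt (eventually_nhdsWithin_of_forall hkey)
end

section
/- Every uniform matroid U_{r,n} has the Rayleigh property: for all e ≠ f in [n] and all a ∈ ℝ_{≥0}^n, U_{ef}(a)·U^{ef}(a) ≤ U_e^f(a)·U_f^e(a). -/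
open Finset

namespace UniformRayleighAux

variable {α : Type*} [DecidableEq α]

/-- Elementary symmetric polynomial of the weights `a` over the set `S`. -/
def E (a : α → ℝ) (S : Finset α) (k : ℕ) : ℝ :=
  ∑ T ∈ S.powersetCard k, ∏ i ∈ T, a i

lemma E_nonneg {a : α → ℝ} (ha : ∀ i, 0 ≤ a i) (S : Finset α) (k : ℕ) :
    0 ≤ E a S k :=
  Finset.sum_nonneg fun T _ => Finset.prod_nonneg fun i _ => ha i

lemma E_zero (a : α → ℝ) (S : Finset α) : E a S 0 = 1 := by
  simp [E]

lemma E_empty_succ (a : α → ℝ) (k : ℕ) : E a (∅ : Finset α) (k + 1) = 0 := by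
  rw [E, Finset.powersetCard_eq_empty.2 (by simp), Finset.sum_empty]

lemma E_insert {a : α → ℝ} {x : α} {S : Finset α} (hx : x ∉ S) (k : ℕ) :
    E a (insert x S) (k + 1) = E a S (k + 1) + a x * E a S k := by
  unfold E
  rw [powersetCard_succ_insert hx, Finset.sum_union, Finset.sum_image, Finset.mul_sum]
  · congr 1
    refine Finset.sum_congr rfl fun T hT => ?_
    rw [Finset.prod_insert fun h => hx ((Finset.mem_powersetCard.1 hT).1 h)]
  · intro T hT U hU hTU
    have hxT : x ∉ T := fun h => hx ((Finset.mem_powersetCard.1 hT).1 h)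
    have hxU : x ∉ U := fun h => hx ((Finset.mem_powersetCard.1 hU).1 h)
    have := congrArg (Finset.erase · x) hTU
    simpa [Finset.erase_insert hxT, Finset.erase_insert hxU] using this
  · rw [Finset.disjoint_left]
    intro T hT hT'
    obtain ⟨U, hU, rfl⟩ := Finset.mem_image.1 hT'
    exact hx ((Finset.mem_powersetCard.1 hT).1 (Finset.mem_insert_self x U))

/-- Key log-concavity-type inequality for elementary symmetric polynomials with
nonnegative weights: if `p + q = u + v` and `p ≤ u ≤ v` then
`E p * E q ≤ E u * E v`. -/
lemma E_key {a : α → ℝ} (ha : ∀ i, 0 ≤ a i) (S : Finset α) :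
    ∀ p q u v : ℕ, p + q = u + v → p ≤ u → u ≤ v →
      E a S p * E a S q ≤ E a S u * E a S v := by
  induction S using Finset.induction_on with
  | empty =>
    intro p q u v hsum hpu huv
    rcases Nat.eq_or_lt_of_le (hpu.trans (huv.trans (by omega : v ≤ q))) with h | h
    · -- p = q, so all four are equal
      have hu : u = p := by omega
      have hv : v = p := by omega
      rw [← h, hu, hv]
    · -- q ≥ 1, so E q = 0
      rcases q with _ | q
      · omega
      · rw [E_empty_succ, mul_zero]
        exact mul_nonneg (E_nonneg ha _ _) (E_nonneg ha _ _)
  | @insert x S hx ih =>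
    intro p q u v hsum hpu huv
    have hvq : v ≤ q := by omega
    -- notation
    set e := E a S with he
    have hrec : ∀ k, E a (insert x S) k = e k + a x * (if k = 0 then 0 else e (k - 1)) := by
      intro k
      rcases k with _ | k
      · simp [E_zero, he]
      · simp [E_insert hx k, he]
    have hax : 0 ≤ a x := ha x
    rw [hrec p, hrec q, hrec u, hrec v]
    rcases Nat.eq_or_lt_of_le (hpu.trans (huv.trans hvq)) with hpq | hpq
    · -- all equal
      have hu : u = p := by omega
      have hv : v = p := by omega
      rw [← hpq, hu, hv]
    · -- p < q, hence q ≥ 1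
      have hq0 : ¬ q = 0 := by omega
      have hv0 : ¬ v = 0 := by omega
      -- term (1): e p * e q ≤ e u * e v
      have t1 : e p * e q ≤ e u * e v := ih p q u v hsum hpu huv
      -- term (3): quadratic terms
      have t3 : (if p = 0 then 0 else e (p-1)) * (if q = 0 then 0 else e (q-1)) ≤
          (if u = 0 then 0 else e (u-1)) * (if v = 0 then 0 else e (v-1)) := by
        rcases Nat.eq_zero_or_pos p with hp0 | hp0
        · rw [if_pos hp0, zero_mul]
          refine mul_nonneg ?_ ?_ <;> split <;>
            first
            | exact le_rfl
            | exact E_nonneg ha _ _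
        · have hp0' : ¬ p = 0 := by omega
          have hu0 : ¬ u = 0 := by omega
          rw [if_neg hp0', if_neg hq0, if_neg hu0, if_neg hv0]
          exact ih (p-1) (q-1) (u-1) (v-1) (by omega) (by omega) (by omega)
      -- term (2): cross terms
      have t2 : e p * (if q = 0 then 0 else e (q-1)) + (if p = 0 then 0 else e (p-1)) * e q ≤
          e u * (if v = 0 then 0 else e (v-1)) + (if u = 0 then 0 else e (u-1)) * e v := by
        rw [if_neg hq0, if_neg hv0]
        have hpv : p < v := by omega
        have cross1 : e p * e (q-1) ≤ e u * e (v-1) := by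
          rcases Nat.le_total u (v-1) with hc | hc
          · exact ih p (q-1) u (v-1) (by omega) hpu hc
          · rw [mul_comm (e u)]
            exact ih p (q-1) (v-1) u (by omega) (by omega) hc
        rcases Nat.eq_zero_or_pos p with hp0 | hp0
        · rw [if_pos hp0, zero_mul, add_zero]
          refine cross1.trans (le_add_of_nonneg_right ?_)
          refine mul_nonneg ?_ (E_nonneg ha _ _)
          split
          · exact le_rfl
          · exact E_nonneg ha _ _
        · have hp0' : ¬ p = 0 := by omega
          have hu0 : ¬ u = 0 := by omega
          rw [if_neg hp0', if_neg hu0]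
          have cross2 : e (p-1) * e q ≤ e (u-1) * e v :=
            ih (p-1) q (u-1) v (by omega) (by omega) (by omega)
          exact add_le_add cross1 cross2
      nlinarith [E_nonneg ha S p, E_nonneg ha S q, E_nonneg ha S u, E_nonneg ha S v,
        mul_le_mul_of_nonneg_left t2 hax, mul_le_mul_of_nonneg_left t3 (mul_nonneg hax hax)]

end UniformRayleighAux

open UniformRayleighAux in
/-- `genPoly` of a uniform matroid factors through `E`. -/
lemma genPoly_uniform {n : ℕ} (I J : Finset (Fin n)) (hIJ : Disjoint I J)
    (a : Fin n → ℝ) (k : ℕ) :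
    genPoly ((Finset.univ : Finset (Fin n)).powersetCard (k + I.card)) I J a =
      (∏ i ∈ I, a i) * E a (Finset.univ \ (I ∪ J)) k := by
  unfold genPoly E
  rw [Finset.mul_sum]
  refine Finset.sum_nbij' (fun B => B \ I) (fun T => T ∪ I) ?_ ?_ ?_ ?_ ?_
  · intro B hB
    simp only [Finset.mem_filter, Finset.mem_powersetCard] at hB
    obtain ⟨⟨-, hcard⟩, hIB, hJB⟩ := hB
    rw [Finset.mem_powersetCard]
    constructor
    · intro x hx
      simp only [Finset.mem_sdiff] at hx ⊢
      refine ⟨Finset.mem_univ x, ?_⟩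
      simp only [Finset.mem_union, not_or]
      exact ⟨hx.2, fun h => Finset.disjoint_left.1 hJB h hx.1⟩
    · rw [Finset.card_sdiff_of_subset hIB, hcard]; omega
  · intro T hT
    rw [Finset.mem_powersetCard] at hT
    obtain ⟨hTsub, hTcard⟩ := hT
    have hTI : Disjoint T I := by
      rw [Finset.disjoint_left]
      intro x hxT hxI
      have := hTsub hxT
      simp only [Finset.mem_sdiff, Finset.mem_union, not_or] at this
      exact this.2.1 hxI
    have hTJ : Disjoint J T := by
      rw [Finset.disjoint_left]
      intro x hxJ hxT
      have := hTsub hxT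
      simp only [Finset.mem_sdiff, Finset.mem_union, not_or] at this
      exact this.2.2 hxJ
    simp only [Finset.mem_filter, Finset.mem_powersetCard]
    refine ⟨⟨fun x _ => Finset.mem_univ x, ?_⟩, Finset.subset_union_right, ?_⟩
    · rw [Finset.card_union_of_disjoint hTI, hTcard]
    · rw [Finset.disjoint_union_right]
      exact ⟨hTJ, hIJ.symm⟩
  · intro B hB
    simp only [Finset.mem_filter] at hB
    exact Finset.sdiff_union_of_subset hB.2.1
  · intro T hT
    rw [Finset.mem_powersetCard] at hT
    apply Finset.union_sdiff_cancel_right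
    rw [Finset.disjoint_left]
    intro x hxT hxI
    have := hT.1 hxT
    simp only [Finset.mem_sdiff, Finset.mem_union, not_or] at this
    exact this.2.1 hxI
  · intro B hB
    simp only [Finset.mem_filter] at hB
    rw [← Finset.prod_union Finset.disjoint_sdiff, Finset.union_sdiff_of_subset hB.2.1]
  
open UniformRayleighAux in
/-- Uniform matroids are Rayleigh. -/
theorem uniform_rayleigh (n r : ℕ) :
    IsRayleigh ((Finset.univ : Finset (Fin n)).powersetCard r) := by
  intro e f hef a ha
  have hgp_nonneg : ∀ (I J : Finset (Fin n)),
      0 ≤ genPoly ((Finset.univ : Finset (Fin n)).powersetCard r) I J a :=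
    fun I J => Finset.sum_nonneg fun B _ => Finset.prod_nonneg fun i _ => ha i
  have hcard_ef : ({e, f} : Finset (Fin n)).card = 2 := by
    rw [Finset.card_insert_of_notMem (by simp [hef]), Finset.card_singleton]
  -- If `r < 2`, the left side is zero.
  rcases Nat.lt_or_ge r 2 with hr | hr
  · have h0 : genPoly ((Finset.univ : Finset (Fin n)).powersetCard r) {e, f} ∅ a = 0 := by
      unfold genPoly
      rw [Finset.sum_eq_zero]
      intro B hB
      simp only [Finset.mem_filter, Finset.mem_powersetCard] at hB
      exfalso
      have := Finset.card_le_card hB.2.1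
      omega
    rw [h0, zero_mul]
    exact mul_nonneg (hgp_nonneg _ _) (hgp_nonneg _ _)
  · obtain ⟨k, rfl⟩ : ∃ k, r = k + 2 := ⟨r - 2, by omega⟩
    have hdisj_ef : Disjoint ({e, f} : Finset (Fin n)) ∅ := Finset.disjoint_empty_right _
    have hdisj_e : Disjoint ({e} : Finset (Fin n)) {f} := Finset.disjoint_singleton.2 hef
    have hdisj_f : Disjoint ({f} : Finset (Fin n)) {e} := Finset.disjoint_singleton.2 hef.symm
    have hdisj_0 : Disjoint (∅ : Finset (Fin n)) {e, f} := Finset.disjoint_empty_left _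
    set S : Finset (Fin n) := Finset.univ \ {e, f} with hS
    have h1 : genPoly ((Finset.univ : Finset (Fin n)).powersetCard (k + 2)) {e, f} ∅ a =
        (a e * a f) * E a S k := by
      have := genPoly_uniform {e, f} ∅ hdisj_ef a k
      rw [hcard_ef] at this
      rw [this, Finset.union_empty, Finset.prod_pair hef]
    have h2 : genPoly ((Finset.univ : Finset (Fin n)).powersetCard (k + 2)) ∅ {e, f} a =
        E a S (k + 2) := by
      have := genPoly_uniform (∅ : Finset (Fin n)) {e, f} hdisj_0 a (k + 2)
      rw [Finset.card_empty] at this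
      simpa using this
    have h3 : genPoly ((Finset.univ : Finset (Fin n)).powersetCard (k + 2)) {e} {f} a =
        a e * E a S (k + 1) := by
      have := genPoly_uniform ({e} : Finset (Fin n)) {f} hdisj_e a (k + 1)
      rw [Finset.card_singleton] at this
      rw [show k + 2 = k + 1 + 1 from rfl, this, Finset.prod_singleton]
      congr 2
    have h4 : genPoly ((Finset.univ : Finset (Fin n)).powersetCard (k + 2)) {f} {e} a =
        a f * E a S (k + 1) := by
      have := genPoly_uniform ({f} : Finset (Fin n)) {e} hdisj_f a (k + 1)
      rw [Finset.card_singleton] at this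
      rw [show k + 2 = k + 1 + 1 from rfl, this, Finset.prod_singleton]
      congr 2
      rw [hS]
      congr 1
      ext x
      simp [or_comm]
    rw [h1, h2, h3, h4]
    have hkey : E a S k * E a S (k + 2) ≤ E a S (k + 1) * E a S (k + 1) :=
      E_key ha S k (k + 2) (k + 1) (k + 1) (by omega) (by omega) le_rfl
    have haef : 0 ≤ a e * a f := mul_nonneg (ha e) (ha f)
    calc a e * a f * E a S k * E a S (k + 2)
        = (a e * a f) * (E a S k * E a S (k + 2)) := by ring
      _ ≤ (a e * a f) * (E a S (k + 1) * E a S (k + 1)) :=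
          mul_le_mul_of_nonneg_left hkey haef
      _ = a e * E a S (k + 1) * (a f * E a S (k + 1)) := by ring
end

section
/- If the basis enumerator polynomial M(x) of a matroid M is stable (M(z) ≠ 0 whenever all coordinates z_i ∈ ℂ have strictly positive imaginary part), then for distinct e, f, the polynomial ∂²M/∂x_e∂x_f · M − (∂M/∂x_e)(∂M/∂x_f), evaluated at any real point, is ≤ 0. -/
open Finset

/-!
Split off `x_e` and `x_f`: `M = x_e x_f A + x_e B + x_f C + D` with `A, B, C, D` free of `x_e, x_f`,
so that `∂_e∂_f M · M - ∂_e M · ∂_f M = AD - BC`. Put `x_e = i` and every other coordinate except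
`x_f` at `a + iε`; then `M = F x_f + G` with `F = Ai + C`, `G = Bi + D`, and stability forces the
root `-G/F` into the closed lower half-plane, i.e. `Im (G F̄) ≥ 0` (which also covers `F = 0`).
This inequality passes to the limit `ε → 0`, where `Im (G F̄) = BC - AD`.
-/

open ComplexConjugate in
theorem Complex.im_mul_conj_nonneg_of_forall_ne_zero {F G : ℂ}
    (h : ∀ z : ℂ, 0 < z.im → F * z + G ≠ 0) : 0 ≤ (G * conj F).im := by
  by_contra! hneg
  have hF : F ≠ 0 := by rintro rfl; simp at hneg
  apply h (-(G * conj F) / (normSq F : ℂ))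
  · rw [div_ofReal_im, neg_im]
    exact div_pos (neg_pos.mpr hneg) (normSq_pos.mpr hF)
  · have : (normSq F : ℂ) ≠ 0 := ofReal_ne_zero.mpr (normSq_pos.mpr hF).ne'
    rw [mul_div_assoc', mul_neg, mul_left_comm, mul_conj]
    field_simp
    ring

section

variable {σ : Type*} [DecidableEq σ]

/-- `∂^I M` at `x` restricted to `x_J = 0`, for `M` the basis generating polynomial of `Bs`; for
`I` independent and `J` coindependent it is the basis generating polynomial of the minor
`M / I \ J`. -/
def minorSum {R : Type*} [CommSemiring R] (Bs : Finset (Finset σ)) (I J : Finset σ) (x : σ → R) :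
    R :=
  ∑ B ∈ Bs.filter (fun B => I ⊆ B ∧ Disjoint J B), ∏ i ∈ B \ I, x i

section CommSemiring

variable {R : Type*} [CommSemiring R] (Bs : Finset (Finset σ))

theorem minorSum_empty_empty (x : σ → R) : minorSum Bs ∅ ∅ x = ∑ B ∈ Bs, ∏ i ∈ B, x i := by
  simp [minorSum]

theorem map_minorSum {S : Type*} [CommSemiring S] (φ : R →+* S) (I J : Finset σ) (x : σ → R) :
    φ (minorSum Bs I J x) = minorSum Bs I J (fun i => φ (x i)) := by
  simp [minorSum, map_sum, map_prod]

theorem minorSum_congr {I J : Finset σ} {x y : σ → R} (h : ∀ i, i ∉ I → i ∉ J → x i = y i) :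
    minorSum Bs I J x = minorSum Bs I J y := by
  refine sum_congr rfl fun B hB => prod_congr rfl fun i hi => ?_
  obtain ⟨hiB, hiI⟩ := mem_sdiff.mp hi
  exact h i hiI fun hiJ => disjoint_left.mp (mem_filter.mp hB).2.2 hiJ hiB

theorem minorSum_eq_mul_add {I : Finset σ} {e : σ} (he : e ∉ I) (J : Finset σ) (x : σ → R) :
    minorSum Bs I J x = x e * minorSum Bs (insert e I) J x + minorSum Bs I (insert e J) x := by
  unfold minorSum
  rw [← sum_filter_add_sum_filter_not _ (fun B => e ∈ B), filter_filter, filter_filter, mul_sum]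
  congr 1
  · refine sum_congr (filter_congr fun B _ => ?_) fun B hB => ?_
    · simp only [insert_subset_iff]; tauto
    · have heB : e ∈ B \ I := mem_sdiff.mpr ⟨(insert_subset_iff.mp (mem_filter.mp hB).2.1).1, he⟩
      rw [sdiff_insert, mul_prod_erase _ _ heB]
  · exact sum_congr (filter_congr fun B _ => by simp only [disjoint_insert_left]; tauto)
      fun _ _ => rfl

theorem minorSum_expand_pair {e f : σ} (hef : e ≠ f) (x : σ → R) :
    minorSum Bs ∅ ∅ x = x e * x f * minorSum Bs {e, f} ∅ x + x e * minorSum Bs {e} {f} x +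
      x f * minorSum Bs {f} {e} x + minorSum Bs ∅ {e, f} x := by
  rw [minorSum_eq_mul_add Bs (notMem_empty e) ∅]
  simp only [insert_empty_eq]
  rw [minorSum_eq_mul_add Bs (notMem_singleton.mpr hef.symm) ∅,
    minorSum_eq_mul_add Bs (notMem_empty f) {e}]
  simp only [insert_empty_eq, pair_comm f e]
  ring

theorem minorSum_update_update {e f : σ} (hef : e ≠ f) (x : σ → R) (u v : R) :
    minorSum Bs ∅ ∅ (Function.update (Function.update x e u) f v) =
      u * v * minorSum Bs {e, f} ∅ x + u * minorSum Bs {e} {f} x +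
        v * minorSum Bs {f} {e} x + minorSum Bs ∅ {e, f} x := by
  have hxy : ∀ I J : Finset σ, e ∈ I ∪ J → f ∈ I ∪ J →
      minorSum Bs I J (Function.update (Function.update x e u) f v) = minorSum Bs I J x :=
    fun I J he hf => minorSum_congr Bs fun i hiI hiJ => by
      rw [Function.update_of_ne (by rintro rfl; simp_all),
        Function.update_of_ne (by rintro rfl; simp_all)]
  rw [minorSum_expand_pair Bs hef, hxy _ _ (by simp) (by simp), hxy _ _ (by simp) (by simp),
    hxy _ _ (by simp) (by simp), hxy _ _ (by simp) (by simp)]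
  simp [hef]

end CommSemiring

theorem minorSum_rayleigh_diff_eq {R : Type*} [CommRing R] (Bs : Finset (Finset σ)) {e f : σ}
    (hef : e ≠ f) (x : σ → R) :
    minorSum Bs {e, f} ∅ x * minorSum Bs ∅ ∅ x - minorSum Bs {e} ∅ x * minorSum Bs {f} ∅ x =
      minorSum Bs {e, f} ∅ x * minorSum Bs ∅ {e, f} x -
        minorSum Bs {e} {f} x * minorSum Bs {f} {e} x := by
  rw [minorSum_expand_pair Bs hef, minorSum_eq_mul_add Bs (notMem_singleton.mpr hef.symm) ∅,
    minorSum_eq_mul_add Bs (notMem_singleton.mpr hef) ∅]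
  simp only [insert_empty_eq, pair_comm f e]
  ring

open MvPolynomial in
theorem MvPolynomial.pderiv_prod_X {R : Type*} [CommSemiring R] (S : Finset σ) (e : σ) :
    pderiv e (∏ i ∈ S, (X i : MvPolynomial σ R)) =
      if e ∈ S then ∏ i ∈ S.erase e, X i else 0 := by
  induction S using Finset.induction_on with
  | empty => simp
  | @insert j S hj ih =>
    rw [prod_insert hj, pderiv_mul, ih, pderiv_X]
    by_cases hej : e = j
    · subst hej
      simp [hj, erase_insert hj]
    · have hjS : j ∉ S.erase e := fun h => hj (mem_of_mem_erase h)
      simp [hej, erase_insert_of_ne (Ne.symm hej), prod_insert hjS, apply_ite (X j * ·)]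

open MvPolynomial in
theorem pderiv_minorSum_X {R : Type*} [CommSemiring R] (Bs : Finset (Finset σ)) {I : Finset σ}
    {e : σ} (he : e ∉ I) (J : Finset σ) :
    pderiv e (minorSum Bs I J (X : σ → MvPolynomial σ R)) = minorSum Bs (insert e I) J X := by
  unfold minorSum
  simp only [map_sum, pderiv_prod_X, ← sum_filter, filter_filter]
  refine sum_congr (filter_congr fun B _ => ?_) fun B _ => by rw [sdiff_insert]
  simp only [insert_subset_iff, mem_sdiff]
  tauto

theorem continuous_minorSum {X R : Type*} [TopologicalSpace X] [CommSemiring R]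
    [TopologicalSpace R] [IsTopologicalSemiring R] (Bs : Finset (Finset σ)) (I J : Finset σ)
    {x : X → σ → R} (hx : ∀ i, Continuous fun t => x t i) :
    Continuous fun t => minorSum Bs I J (x t) :=
  continuous_finsetSum _ fun _ _ => continuous_finsetProd _ fun i _ => hx i

open Complex ComplexConjugate in
theorem minorSum_rayleigh_of_stable (Bs : Finset (Finset σ)) {e f : σ} (hef : e ≠ f)
    (hstable : ∀ z : σ → ℂ, (∀ i, 0 < (z i).im) → minorSum Bs ∅ ∅ z ≠ 0) (a : σ → ℝ) :
    minorSum Bs {e, f} ∅ a * minorSum Bs ∅ {e, f} a ≤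
      minorSum Bs {e} {f} a * minorSum Bs {f} {e} a := by
  set x : ℝ → σ → ℂ := fun ε i => a i + ε * I
  set F : ℝ → ℂ := fun ε => minorSum Bs {e, f} ∅ (x ε) * I + minorSum Bs {f} {e} (x ε)
  set G : ℝ → ℂ := fun ε => minorSum Bs {e} {f} (x ε) * I + minorSum Bs ∅ {e, f} (x ε)
  have hpos : ∀ ε > 0, 0 ≤ (G ε * conj (F ε)).im := fun ε hε =>
    im_mul_conj_nonneg_of_forall_ne_zero fun v hv => by
      have hz : ∀ i, 0 < (Function.update (Function.update (x ε) e I) f v i).im := by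
        intro i
        rcases eq_or_ne i f with rfl | hif
        · simpa using hv
        rcases eq_or_ne i e with rfl | hie
        · simp [hif]
        · simpa [hif, hie, x] using hε
      have := hstable _ hz
      rwa [minorSum_update_update Bs hef, show ∀ A B C D : ℂ,
        I * v * A + I * B + v * C + D = (A * I + C) * v + (B * I + D) from
          fun _ _ _ _ => by ring] at this
  have hcont : Continuous fun ε => (G ε * conj (F ε)).im := by
    have hx : ∀ I J : Finset σ, Continuous fun ε => minorSum Bs I J (x ε) :=
      fun I J => continuous_minorSum Bs I J fun i => by fun_prop
    simp only [F, G]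
    fun_prop
  have h0 : 0 ≤ (G 0 * conj (F 0)).im :=
    ge_of_tendsto (hcont.tendsto 0 |>.mono_left nhdsWithin_le_nhds)
      (eventually_nhdsWithin_of_forall (s := Set.Ioi 0) hpos)
  have hx0 : ∀ I J : Finset σ, minorSum Bs I J (x 0) = minorSum Bs I J a := fun I J => by
    simpa [x] using (map_minorSum Bs ofRealHom I J a).symm
  simp [F, G, hx0] at h0
  linarith

end

open MvPolynomial in
/-- If the basis enumerator polynomial is stable (nonvanishing when all
coordinates have positive imaginary part), then
`M·∂_e∂_f M − ∂_e M·∂_f M ≤ 0` at every real point. -/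
theorem stable_implies_rayleigh_diff (n : ℕ) (Bs : Finset (Finset (Fin n)))
    (e f : Fin n) (hef : e ≠ f)
    (hstable : ∀ z : Fin n → ℂ, (∀ i, 0 < (z i).im) →
      MvPolynomial.eval z (MvPolynomial.map (algebraMap ℝ ℂ)
        (∑ B ∈ Bs, ∏ i ∈ B, (MvPolynomial.X i : MvPolynomial (Fin n) ℝ))) ≠ 0) :
    ∀ a : Fin n → ℝ,
      MvPolynomial.eval a
          (MvPolynomial.pderiv e (MvPolynomial.pderiv f
            (∑ B ∈ Bs, ∏ i ∈ B, (MvPolynomial.X i : MvPolynomial (Fin n) ℝ)))) *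
        MvPolynomial.eval a (∑ B ∈ Bs, ∏ i ∈ B, (MvPolynomial.X i : MvPolynomial (Fin n) ℝ)) -
        MvPolynomial.eval a (MvPolynomial.pderiv e
            (∑ B ∈ Bs, ∏ i ∈ B, (MvPolynomial.X i : MvPolynomial (Fin n) ℝ))) *
          MvPolynomial.eval a (MvPolynomial.pderiv f
            (∑ B ∈ Bs, ∏ i ∈ B, (MvPolynomial.X i : MvPolynomial (Fin n) ℝ))) ≤ 0 := by
  intro a
  rw [← minorSum_empty_empty] at hstable ⊢
  rw [pderiv_minorSum_X Bs (notMem_empty e), pderiv_minorSum_X Bs (notMem_empty f),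
    insert_empty_eq, insert_empty_eq, pderiv_minorSum_X Bs (notMem_singleton.mpr hef)]
  simp only [map_minorSum, eval_X]
  rw [minorSum_rayleigh_diff_eq Bs hef]
  have hrayleigh := minorSum_rayleigh_of_stable Bs hef
    (fun z hz => by simpa [map_minorSum] using hstable z hz) a
  linarith
end

section
/- The direct sum of two Rayleigh matroids is Rayleigh. -/
open Finset

/-!
The basis generating polynomial of a direct sum, restricted to bases containing `I` and avoiding
`J`, factors into the restricted polynomials of the summands. For `e`, `f` in different summands
both sides of the Rayleigh inequality are therefore the same product; for `e`, `f` in one summand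
the inequality is that summand's, multiplied by the square of the other summand's polynomial.
-/

namespace Finset

variable {α β : Type*}

lemma disjoint_disjSum {u : Finset (α ⊕ β)} {s : Finset α} {t : Finset β} :
    Disjoint u (s.disjSum t) ↔ Disjoint u.toLeft s ∧ Disjoint u.toRight t := by
  simp only [disjoint_left, Sum.forall, mem_toLeft, mem_toRight, inl_mem_disjSum, inr_mem_disjSum]

@[simp] lemma toLeft_empty : (∅ : Finset (α ⊕ β)).toLeft = ∅ := by ext; simp
@[simp] lemma toRight_empty : (∅ : Finset (α ⊕ β)).toRight = ∅ := by ext; simp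
@[simp] lemma toLeft_singleton_inl (a : α) : ({.inl a} : Finset (α ⊕ β)).toLeft = {a} := by
  ext; simp
@[simp] lemma toLeft_singleton_inr (b : β) : ({.inr b} : Finset (α ⊕ β)).toLeft = ∅ := by
  ext; simp
@[simp] lemma toRight_singleton_inl (a : α) : ({.inl a} : Finset (α ⊕ β)).toRight = ∅ := by
  ext; simp
@[simp] lemma toRight_singleton_inr (b : β) : ({.inr b} : Finset (α ⊕ β)).toRight = {b} := by
  ext; simp

end Finset

section DirectSum

variable {α β : Type*} [DecidableEq α] [DecidableEq β]

def disjSumBases (Bs₁ : Finset (Finset α)) (Bs₂ : Finset (Finset β)) :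
    Finset (Finset (α ⊕ β)) :=
  (Bs₁ ×ˢ Bs₂).image fun p => p.1.disjSum p.2

lemma genPoly_disjSumBases (Bs₁ : Finset (Finset α)) (Bs₂ : Finset (Finset β))
    (I J : Finset (α ⊕ β)) (a : α ⊕ β → ℝ) :
    genPoly (disjSumBases Bs₁ Bs₂) I J a =
      genPoly Bs₁ I.toLeft J.toLeft (a ∘ .inl) * genPoly Bs₂ I.toRight J.toRight (a ∘ .inr) := by
  have hfilter :
      (Bs₁ ×ˢ Bs₂).filter (fun p => I ⊆ p.1.disjSum p.2 ∧ Disjoint J (p.1.disjSum p.2)) =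
      Bs₁.filter (fun B => I.toLeft ⊆ B ∧ Disjoint J.toLeft B) ×ˢ
        Bs₂.filter (fun B => I.toRight ⊆ B ∧ Disjoint J.toRight B) := by
    ext
    simp only [mem_filter, mem_product, subset_disjSum, disjoint_disjSum]
    tauto
  rw [genPoly, disjSumBases, filter_image,
    sum_image fun p _ q _ h => by simpa [Prod.ext_iff] using h, hfilter,
    sum_product, genPoly, genPoly, sum_mul_sum]
  simp only [prod_disjSum, Function.comp_apply]

lemma mul_mul_mul_le_of_mul_le {p q r s : ℝ} (h : p * q ≤ r * s) (c : ℝ) :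
    p * c * (q * c) ≤ r * c * (s * c) :=
  calc p * c * (q * c) = p * q * (c * c) := by ring
    _ ≤ r * s * (c * c) := mul_le_mul_of_nonneg_right h (mul_self_nonneg c)
    _ = r * c * (s * c) := by ring

theorem IsRayleigh.disjSumBases {Bs₁ : Finset (Finset α)} {Bs₂ : Finset (Finset β)}
    (h₁ : IsRayleigh Bs₁) (h₂ : IsRayleigh Bs₂) : IsRayleigh (disjSumBases Bs₁ Bs₂) := by
  rintro (e | e) (f | f) hef a ha <;>
    simp only [genPoly_disjSumBases, toLeft_insert_inl, toLeft_insert_inr, toRight_insert_inl,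
      toRight_insert_inr, toLeft_singleton_inl, toLeft_singleton_inr, toRight_singleton_inl,
      toRight_singleton_inr, toLeft_empty, toRight_empty, insert_empty]
  · exact mul_mul_mul_le_of_mul_le (h₁ e f (ne_of_apply_ne Sum.inl hef) _ fun _ => ha _) _
  · exact le_of_eq (by ring)
  · exact le_of_eq (by ring)
  · simp only [mul_comm (genPoly Bs₁ ∅ ∅ _)]
    exact mul_mul_mul_le_of_mul_le (h₂ e f (ne_of_apply_ne Sum.inr hef) _ fun _ => ha _) _

end DirectSum

theorem directSum_rayleigh_general (m n : ℕ)
    (Bs₁ : Finset (Finset (Fin m))) (Bs₂ : Finset (Finset (Fin n)))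
    (hR₁ : IsRayleigh Bs₁) (hR₂ : IsRayleigh Bs₂) :
    IsRayleigh ((Bs₁ ×ˢ Bs₂).image (fun p => p.1.disjSum p.2)) :=
  hR₁.disjSumBases hR₂

/-- The direct sum of two Rayleigh matroids is Rayleigh.  The disjoint ground
sets are modeled by the sum type `Fin m ⊕ Fin n`, and the bases of the direct
sum are unions `B₁ ⊔ B₂` of a basis of each summand. -/
theorem directSum_rayleigh (m n : ℕ)
    (Bs₁ : Finset (Finset (Fin m))) (Bs₂ : Finset (Finset (Fin n)))
    (hM₁ : IsMatroidBases Bs₁) (hM₂ : IsMatroidBases Bs₂)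
    (hR₁ : IsRayleigh Bs₁) (hR₂ : IsRayleigh Bs₂) :
    IsRayleigh ((Bs₁ ×ˢ Bs₂).image (fun p => p.1.disjSum p.2)) :=
  directSum_rayleigh_general m n Bs₁ Bs₂ hR₁ hR₂
end
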